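/- Under the shared clustering-perturbation setup, suppose additionally that there is C > 0 such that for every k ∈ [K] and every i ∈ D_k, (1/M_k)·( Σ_{i₁∈D_k} d_{i₁}^{(k)} ) / d_i^{(k)} ≤ C. Then for every k ∈ [K] and every i ∈ D_k, (1/M_k)·( Σ_{i₁∈D_k} d̂_{i₁}^{(k)} ) / d̂_i^{(k)} ≤ C + A₈·ε, where A₈ = 4c/m². -/

import Mathlib

/-!
The Gaussian kernel `t ↦ exp (-t² / (2σ²))` is `c`-Lipschitz, so every estimated affinity is
within `cε` of the true one. In a cluster of size `n`, every true degree `a` lies in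
`[(n - 1) m, n - 1]`, the estimated degree `â` is within `(n - 1) cε` of `a` (hence at least
`(n - 1) m / 2`, since `2cε < m`), and the total degree moves by at most `n (n - 1) cε`.
Cross-multiplying, the numerator of the difference of the two mean-to-degree ratios is at most
`2 n (n - 1)² cε` and the denominator `n a â` is at least `n (n - 1)² m² / 2`, which gives the
bound `4cε / m²`.
-/

open Finset Real

lemma mul_exp_neg_sq_div_two_le (v : ℝ) : v * exp (-v ^ 2 / 2) ≤ exp (-1 / 2) := by
  have hv : v ≤ exp ((v ^ 2 - 1) / 2) := by
    nlinarith [add_one_le_exp ((v ^ 2 - 1) / 2), sq_nonneg (v - 1)]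
  calc v * exp (-v ^ 2 / 2) ≤ exp ((v ^ 2 - 1) / 2) * exp (-v ^ 2 / 2) := by gcongr
    _ = exp (-1 / 2) := by rw [← exp_add]; ring_nf

lemma hasDerivAt_exp_neg_sq_div (σ t : ℝ) :
    HasDerivAt (fun x => exp (-x ^ 2 / (2 * σ ^ 2)))
      (exp (-t ^ 2 / (2 * σ ^ 2)) * (-t / σ ^ 2)) t :=
  (((hasDerivAt_pow 2 t).neg.div_const (2 * σ ^ 2)).congr_deriv (by push_cast; ring)).exp

lemma abs_deriv_exp_neg_sq_div_le {σ : ℝ} (hσ : 0 < σ) (t : ℝ) :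
    |exp (-t ^ 2 / (2 * σ ^ 2)) * (-t / σ ^ 2)| ≤ 1 / (σ * √(exp 1)) := by
  have hkey := mul_exp_neg_sq_div_two_le (|t| / σ)
  rw [div_pow, sq_abs, show -(1 : ℝ) / 2 = -(1 / 2) by ring, exp_neg,
    show -(t ^ 2 / σ ^ 2) / 2 = -t ^ 2 / (2 * σ ^ 2) by ring] at hkey
  rw [← exp_half, abs_mul, abs_of_pos (exp_pos _), abs_div, abs_neg,
    abs_of_pos (by positivity : 0 < σ ^ 2)]
  calc exp (-t ^ 2 / (2 * σ ^ 2)) * (|t| / σ ^ 2)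
      = |t| / σ * exp (-t ^ 2 / (2 * σ ^ 2)) / σ := by field_simp
    _ ≤ (exp (1 / 2))⁻¹ / σ := by gcongr
    _ = 1 / (σ * exp (1 / 2)) := by field_simp

/-- The maximal slope `1 / (σ √e)` of the Gaussian kernel is attained at `±σ`. -/
lemma abs_exp_neg_sq_div_sub_le {σ : ℝ} (hσ : 0 < σ) (x y : ℝ) :
    |exp (-y ^ 2 / (2 * σ ^ 2)) - exp (-x ^ 2 / (2 * σ ^ 2))|
      ≤ 1 / (σ * √(exp 1)) * |y - x| := by
  simpa only [Real.norm_eq_abs] using convex_univ.norm_image_sub_le_of_norm_hasDerivWithin_le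
    (fun t _ => (hasDerivAt_exp_neg_sq_div σ t).hasDerivWithinAt)
    (fun t _ => abs_deriv_exp_neg_sq_div_le hσ t) (Set.mem_univ x) (Set.mem_univ y)

lemma exp_neg_sq_div_le_one (σ x : ℝ) : exp (-x ^ 2 / (2 * σ ^ 2)) ≤ 1 :=
  exp_le_one_iff.mpr <|
    div_nonpos_of_nonpos_of_nonneg (neg_nonpos.mpr (sq_nonneg x)) (by positivity)

lemma mean_div_le_add_of_abs_sub_le {n a â S Ŝ m δ : ℝ} (hn : 1 < n) (hm : 0 < m)
    (hδ : 0 ≤ δ) (hδm : 2 * δ ≤ m) (ha_lb : (n - 1) * m ≤ a) (ha_ub : a ≤ n - 1)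
    (hâ : |â - a| ≤ (n - 1) * δ)
    (hS₀ : 0 ≤ S) (hS : S ≤ n * (n - 1)) (hŜ : Ŝ ≤ S + n * ((n - 1) * δ)) :
    1 / n * Ŝ / â ≤ 1 / n * S / a + 4 * δ / m ^ 2 := by
  have hn₁ : 0 < n - 1 := by linarith
  have ha : 0 < a := (mul_pos hn₁ hm).trans_le ha_lb
  obtain ⟨hâ_lb, hâ_ub⟩ := abs_le.mp hâ
  have hâ_lb' : (n - 1) * m / 2 ≤ â := by
    linarith [mul_le_mul_of_nonneg_left hδm hn₁.le]
  have hâ₀ : 0 < â := (by positivity : 0 < (n - 1) * m / 2).trans_le hâ_lb'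
  have hnum : Ŝ * a - S * â ≤ 2 * n * (n - 1) ^ 2 * δ := by
    nlinarith [mul_le_mul_of_nonneg_right hŜ ha.le,
      mul_le_mul_of_nonneg_left ha_ub (by positivity : 0 ≤ n * ((n - 1) * δ)),
      mul_le_mul_of_nonneg_left (by linarith : a - â ≤ (n - 1) * δ) hS₀,
      mul_le_mul_of_nonneg_right hS (by positivity : 0 ≤ (n - 1) * δ)]
  have hden : n * (n - 1) ^ 2 * m ^ 2 / 2 ≤ n * (a * â) := by
    nlinarith [mul_le_mul ha_lb hâ_lb' (by positivity) ha.le]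
  calc 1 / n * Ŝ / â = 1 / n * S / a + (Ŝ * a - S * â) / (n * (a * â)) := by
        field_simp; ring
    _ ≤ 1 / n * S / a + 2 * n * (n - 1) ^ 2 * δ / (n * (n - 1) ^ 2 * m ^ 2 / 2) := by
        gcongr 1 / n * S / a + ?_
        exact div_le_div₀ (by positivity) hnum (by positivity) hden
    _ = 1 / n * S / a + 4 * δ / m ^ 2 := by field_simp; ring

section

variable {ι : Type*} [DecidableEq ι] {s : Finset ι} {i : ι} {f : ι → ℝ} {b : ℝ}

lemma sum_le_card_sub_one_mul_of_le (hi : i ∈ s) (hfi : f i = 0)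
    (hf : ∀ j ∈ s, j ≠ i → f j ≤ b) : ∑ j ∈ s, f j ≤ (#s - 1) * b := by
  rw [← add_sum_erase s f hi, hfi, zero_add, ← cast_card_erase_of_mem hi, ← nsmul_eq_mul]
  exact sum_le_card_nsmul _ _ _ fun j hj => hf j (mem_of_mem_erase hj) (ne_of_mem_erase hj)

lemma card_sub_one_mul_le_sum_of_le (hi : i ∈ s) (hfi : f i = 0)
    (hf : ∀ j ∈ s, j ≠ i → b ≤ f j) : (#s - 1) * b ≤ ∑ j ∈ s, f j := by
  rw [← add_sum_erase s f hi, hfi, zero_add, ← cast_card_erase_of_mem hi, ← nsmul_eq_mul]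
  exact card_nsmul_le_sum _ _ _ fun j hj => hf j (mem_of_mem_erase hj) (ne_of_mem_erase hj)

end

lemma mean_degree_div_degree_le_add {ι : Type*} [DecidableEq ι] {s : Finset ι}
    {A Â : ι → ι → ℝ} {m δ : ℝ} (hs : 2 ≤ #s) (hm : 0 < m) (hδ : 0 ≤ δ) (hδm : 2 * δ ≤ m)
    (hA_diag : ∀ j ∈ s, A j j = 0) (hÂ_diag : ∀ j ∈ s, Â j j = 0)
    (hA_le : ∀ i ∈ s, ∀ j ∈ s, A i j ≤ 1) (hA_ge : ∀ i ∈ s, ∀ j ∈ s, i ≠ j → m ≤ A i j)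
    (hÂA : ∀ i ∈ s, ∀ j ∈ s, i ≠ j → |Â i j - A i j| ≤ δ) {i : ι} (hi : i ∈ s) :
    1 / (#s : ℝ) * (∑ i₁ ∈ s, ∑ j ∈ s, Â i₁ j) / ∑ j ∈ s, Â i j
      ≤ 1 / (#s : ℝ) * (∑ i₁ ∈ s, ∑ j ∈ s, A i₁ j) / ∑ j ∈ s, A i j + 4 * δ / m ^ 2 := by
  have hs' : (1 : ℝ) < #s := by exact_mod_cast hs
  have hdeg_ub : ∀ i ∈ s, ∑ j ∈ s, A i j ≤ #s - 1 := fun i hi => by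
    simpa using sum_le_card_sub_one_mul_of_le hi (hA_diag i hi) fun j hj _ => hA_le i hi j hj
  have hdeg_lb : ∀ i ∈ s, (#s - 1) * m ≤ ∑ j ∈ s, A i j := fun i hi =>
    card_sub_one_mul_le_sum_of_le hi (hA_diag i hi) fun j hj hji => hA_ge i hi j hj hji.symm
  have hdeg_close :
      ∀ i ∈ s, |∑ j ∈ s, Â i j - ∑ j ∈ s, A i j| ≤ (#s - 1) * δ := fun i hi => by
    rw [← sum_sub_distrib]
    exact (abs_sum_le_sum_abs _ _).trans <| sum_le_card_sub_one_mul_of_le hi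
      (by simp [hA_diag i hi, hÂ_diag i hi]) fun j hj hji => hÂA i hi j hj hji.symm
  have hS₀ : 0 ≤ ∑ i₁ ∈ s, ∑ j ∈ s, A i₁ j :=
    sum_nonneg fun i hi => (mul_nonneg (by linarith) hm.le).trans (hdeg_lb i hi)
  have hS : ∑ i₁ ∈ s, ∑ j ∈ s, A i₁ j ≤ #s * (#s - 1) := by
    simpa only [nsmul_eq_mul] using sum_le_card_nsmul s _ _ hdeg_ub
  have hŜ :
      ∑ i₁ ∈ s, ∑ j ∈ s, Â i₁ j ≤ ∑ i₁ ∈ s, ∑ j ∈ s, A i₁ j + #s * ((#s - 1) * δ) := by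
    rw [← nsmul_eq_mul, ← sum_const, ← sum_add_distrib]
    exact sum_le_sum fun i hi => by linarith [(abs_le.mp (hdeg_close i hi)).2]
  exact mean_div_le_add_of_abs_sub_le hs' hm hδ hδm (hdeg_lb i hi) (hdeg_ub i hi)
    (hdeg_close i hi) hS₀ hS hŜ

theorem degree_ratio_perturbation_bound_general
    (M K : ℕ)
    -- the clusters: a partition of [M] into K clusters, each of size ≥ 2
    (D : Fin K → Finset (Fin M))
    (hDcard : ∀ k : Fin K, 2 ≤ (D k).card)
    -- true and estimated distances: nonnegative, symmetric, zero diagonal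
    (d dh : Fin M → Fin M → ℝ)
    -- affinity matrices
    (σa : ℝ) (hσa : 0 < σa)
    (A Ah : Fin M → Fin M → ℝ)
    (hA : ∀ i j, A i j = if i = j then 0 else Real.exp (-(d i j) ^ 2 / (2 * σa ^ 2)))
    (hAh : ∀ i j, Ah i j = if i = j then 0 else Real.exp (-(dh i j) ^ 2 / (2 * σa ^ 2)))
    -- cluster degrees
    (deg degh : Fin K → Fin M → ℝ)
    (hdeg : ∀ k i, deg k i = ∑ j ∈ D k, A i j)
    (hdegh : ∀ k i, degh k i = ∑ j ∈ D k, Ah i j)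
    -- m = min intra-cluster true affinity, c = Lipschitz constant of the kernel
    (m c : ℝ)
    (hc : c = 1 / (σa * Real.sqrt (Real.exp 1)))
    (hm_le : ∀ k : Fin K, ∀ i ∈ D k, ∀ j ∈ D k, i ≠ j → m ≤ A i j)
    -- the estimation error event
    (ε : ℝ) (hε : 0 < ε) (hεlt : ε < m / (2 * c))
    (hclose : ∀ i j : Fin M, i ≠ j → |dh i j - d i j| < ε)
    -- Assumption 4 for the true quantities
    (C : ℝ)
    (hassump : ∀ k : Fin K, ∀ i ∈ D k,
      (1 / ((D k).card : ℝ)) * (∑ i₁ ∈ D k, deg k i₁) / deg k i ≤ C) :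
    ∀ k : Fin K, ∀ i ∈ D k,
      (1 / ((D k).card : ℝ)) * (∑ i₁ ∈ D k, degh k i₁) / degh k i
        ≤ C + (4 * c / m ^ 2) * ε := by
  intro k i hi
  have hc₀ : 0 < c := by rw [hc]; positivity
  have hm : 0 < m := (div_pos_iff_of_pos_right (by positivity)).mp (hε.trans hεlt)
  have hcεm : 2 * (c * ε) ≤ m := by linarith [(lt_div_iff₀ (by positivity)).mp hεlt]
  have hA_le : ∀ i j, A i j ≤ 1 := fun i j => by
    rw [hA]; split_ifs
    exacts [zero_le_one, exp_neg_sq_div_le_one σa (d i j)]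
  have hAhA : ∀ i j, i ≠ j → |Ah i j - A i j| ≤ c * ε := fun i j hij => by
    rw [hA, hAh, if_neg hij, if_neg hij, hc]
    exact (abs_exp_neg_sq_div_sub_le hσa _ _).trans
      (mul_le_mul_of_nonneg_left (hclose i j hij).le (hc ▸ hc₀.le))
  have hratio := mean_degree_div_degree_le_add (hDcard k) hm (by positivity) hcεm
    (fun j _ => by simp [hA]) (fun j _ => by simp [hAh]) (fun i _ j _ => hA_le i j)
    (hm_le k) (fun i _ j _ => hAhA i j) hi
  simp only [hdeg, hdegh] at hassump ⊢
  linarith [hassump k i hi, show 4 * c / m ^ 2 * ε = 4 * (c * ε) / m ^ 2 by ring]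

/-- SHARED SETUP + STATEMENT. -/
theorem degree_ratio_perturbation_bound
    (M K : ℕ) (hM : 2 ≤ M) (hK : 1 ≤ K)
    -- the clusters: a partition of [M] into K clusters, each of size ≥ 2
    (D : Fin K → Finset (Fin M))
    (hDdisj : ∀ k l : Fin K, k ≠ l → Disjoint (D k) (D l))
    (hDcover : ∀ i : Fin M, ∃ k : Fin K, i ∈ D k)
    (hDcard : ∀ k : Fin K, 2 ≤ (D k).card)
    -- true and estimated distances: nonnegative, symmetric, zero diagonal
    (d dh : Fin M → Fin M → ℝ)
    (hd0 : ∀ i j, 0 ≤ d i j) (hdh0 : ∀ i j, 0 ≤ dh i j)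
    (hdsymm : ∀ i j, d i j = d j i) (hdhsymm : ∀ i j, dh i j = dh j i)
    (hddiag : ∀ i, d i i = 0) (hdhdiag : ∀ i, dh i i = 0)
    -- affinity matrices
    (σa : ℝ) (hσa : 0 < σa)
    (A Ah : Fin M → Fin M → ℝ)
    (hA : ∀ i j, A i j = if i = j then 0 else Real.exp (-(d i j) ^ 2 / (2 * σa ^ 2)))
    (hAh : ∀ i j, Ah i j = if i = j then 0 else Real.exp (-(dh i j) ^ 2 / (2 * σa ^ 2)))
    -- cluster degrees
    (deg degh : Fin K → Fin M → ℝ)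
    (hdeg : ∀ k i, deg k i = ∑ j ∈ D k, A i j)
    (hdegh : ∀ k i, degh k i = ∑ j ∈ D k, Ah i j)
    -- m = min intra-cluster true affinity, c = Lipschitz constant of the kernel
    (m c : ℝ)
    (hc : c = 1 / (σa * Real.sqrt (Real.exp 1)))
    (hm_le : ∀ k : Fin K, ∀ i ∈ D k, ∀ j ∈ D k, i ≠ j → m ≤ A i j)
    (hm_attained : ∃ k : Fin K, ∃ i ∈ D k, ∃ j ∈ D k, i ≠ j ∧ m = A i j)
    -- the estimation error event
    (ε : ℝ) (hε : 0 < ε) (hεlt : ε < m / (2 * c))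
    (hclose : ∀ i j : Fin M, i ≠ j → |dh i j - d i j| < ε)
    -- Assumption 4 for the true quantities
    (C : ℝ) (hC : 0 < C)
    (hassump : ∀ k : Fin K, ∀ i ∈ D k,
      (1 / ((D k).card : ℝ)) * (∑ i₁ ∈ D k, deg k i₁) / deg k i ≤ C) :
    ∀ k : Fin K, ∀ i ∈ D k,
      (1 / ((D k).card : ℝ)) * (∑ i₁ ∈ D k, degh k i₁) / degh k i
        ≤ C + (4 * c / m ^ 2) * ε :=
  degree_ratio_perturbation_bound_general M K D hDcard d dh σa hσa A Ah hA hAh deg degh hdeg hdegh m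
    c hc hm_le ε hε hεlt hclose C hassump
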